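/- Fano-type bound for Rényi entropy (Ben-Bassat–Raviv): for α > 1 and θ = max_b p_b, H^(α)(P) ≤ (1/(1-α))·log₂(θ^α + (1-θ)^α/(B-1)^(α-1)), with equality for the near-uniform distribution. -/

import Mathlib

/-!
By convexity of `x ↦ x ^ α` (power mean inequality), once the largest mass `θ` is fixed the
remaining mass `1 - θ` contributes least to `∑ b, p b ^ α` when spread evenly over the other
`B - 1` symbols, which gives `∑ b, p b ^ α ≥ θ ^ α + (1 - θ) ^ α / (B - 1) ^ (α - 1)`.
Since `1 / (1 - α) < 0` and `logb 2` is monotone, this lower bound becomes the stated upper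
bound on the Rényi entropy, attained by the near-uniform distribution.
-/

open Real Finset

theorem Real.rpow_sum_div_card_rpow_le_sum_rpow {ι : Type*} (s : Finset ι) {f : ι → ℝ}
    (hf : ∀ i ∈ s, 0 ≤ f i) {p : ℝ} (hp : 1 ≤ p) :
    (∑ i ∈ s, f i) ^ p / (#s : ℝ) ^ (p - 1) ≤ ∑ i ∈ s, f i ^ p :=
  div_le_of_le_mul₀ (by positivity) (sum_nonneg fun i hi => rpow_nonneg (hf i hi) p)
    (mul_comm (∑ i ∈ s, f i ^ p) _ ▸ rpow_sum_le_const_mul_sum_rpow_of_nonneg s hp hf)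

theorem Real.mul_div_rpow_eq_rpow_div_rpow_sub_one {c x : ℝ} (hc : 0 < c) (hx : 0 ≤ x) (α : ℝ) :
    c * (x / c) ^ α = x ^ α / c ^ (α - 1) := by
  rw [div_rpow hx hc.le, rpow_sub hc, rpow_one]
  have : 0 < c ^ α := rpow_pos_of_pos hc α
  field_simp

theorem Real.one_div_one_sub_mul_logb_le_of_le {b α x y : ℝ} (hb : 1 < b) (hα : 1 < α)
    (hx : 0 < x) (hxy : x ≤ y) :
    1 / (1 - α) * logb b y ≤ 1 / (1 - α) * logb b x :=
  mul_le_mul_of_nonpos_left (logb_le_logb_of_le hb hx hxy)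
    (div_nonpos_of_nonneg_of_nonpos zero_le_one (by linarith))

section PowerSum

variable {ι : Type*} [Fintype ι] [DecidableEq ι]

theorem rpow_add_sum_erase_div_le_sum_rpow {p : ι → ℝ} (hp : ∀ b, 0 ≤ p b) (i : ι) {α : ℝ}
    (hα : 1 ≤ α) :
    p i ^ α + (∑ b ∈ univ.erase i, p b) ^ α / ((Fintype.card ι : ℝ) - 1) ^ (α - 1) ≤
      ∑ b, p b ^ α := by
  have hcard : (#(univ.erase i) : ℝ) = Fintype.card ι - 1 := by
    rw [card_erase_of_mem (mem_univ i), card_univ,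
      Nat.cast_sub (Fintype.card_pos_iff.mpr ⟨i⟩), Nat.cast_one]
  rw [← add_sum_erase _ _ (mem_univ i), ← hcard]
  gcongr
  exact rpow_sum_div_card_rpow_le_sum_rpow _ (fun b _ => hp b) hα

theorem sum_ite_eq_rpow (i : ι) (x y α : ℝ) :
    ∑ b, (if b = i then x else y) ^ α = x ^ α + ((Fintype.card ι : ℝ) - 1) * y ^ α := by
  rw [← add_sum_erase _ _ (mem_univ i), if_pos rfl,
    sum_congr rfl fun b hb => by rw [if_neg (ne_of_mem_erase hb)], sum_const,
    card_erase_of_mem (mem_univ i), card_univ, nsmul_eq_mul,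
    Nat.cast_sub (Fintype.card_pos_iff.mpr ⟨i⟩), Nat.cast_one]

end PowerSum

/-- Fano-type bound for Rényi entropy (Ben-Bassat–Raviv), with equality for the
near-uniform distribution. -/
theorem renyi_entropy_fano_bound {B : ℕ} (hB : 2 ≤ B) (p : Fin B → ℝ)
    (hp : ∀ b, 0 ≤ p b) (hsum : ∑ b, p b = 1) (α : ℝ) (hα : 1 < α) :
    (1 / (1 - α)) * Real.logb 2 (∑ b, p b ^ α) ≤
      (1 / (1 - α)) * Real.logb 2
        ((Finset.univ.sup' ⟨⟨0, by omega⟩, Finset.mem_univ _⟩ p) ^ α +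
          (1 - Finset.univ.sup' ⟨⟨0, by omega⟩, Finset.mem_univ _⟩ p) ^ α /
            ((B : ℝ) - 1) ^ (α - 1)) ∧
    ∀ θ : ℝ, 1 / (B : ℝ) ≤ θ → θ ≤ 1 →
      (1 / (1 - α)) * Real.logb 2
          (∑ b : Fin B, (if b = ⟨0, by omega⟩ then θ else (1 - θ) / ((B : ℝ) - 1)) ^ α) =
        (1 / (1 - α)) * Real.logb 2 (θ ^ α + (1 - θ) ^ α / ((B : ℝ) - 1) ^ (α - 1)) := by
  have hB1 : (0 : ℝ) < B - 1 := by
    have : (2 : ℝ) ≤ B := by exact_mod_cast hB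
    linarith
  refine ⟨?_, fun θ _ hθ1 => ?_⟩
  · set θ := univ.sup' ⟨⟨0, by omega⟩, mem_univ _⟩ p
    obtain ⟨i, -, hi⟩ := exists_mem_eq_sup' ⟨⟨0, by omega⟩, mem_univ _⟩ p
    change θ = p i at hi
    have hθ : 0 < θ := by
      by_contra! h
      have : ∑ b, p b ≤ 0 := sum_nonpos fun b _ => (le_sup' p (mem_univ b)).trans h
      linarith
    have hrest : ∑ b ∈ univ.erase i, p b = 1 - θ := by rw [sum_erase_eq_sub (mem_univ i), hsum, hi]
    have hθ1 : θ ≤ 1 := hi ▸ hsum ▸ single_le_sum (fun b _ => hp b) (mem_univ i)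
    have hlower := rpow_add_sum_erase_div_le_sum_rpow hp i hα.le
    rw [hrest, ← hi, Fintype.card_fin] at hlower
    refine one_div_one_sub_mul_logb_le_of_le one_lt_two hα ?_ hlower
    exact add_pos_of_pos_of_nonneg (rpow_pos_of_pos hθ α)
      (div_nonneg (rpow_nonneg (sub_nonneg.mpr hθ1) α) (rpow_nonneg hB1.le _))
  · rw [sum_ite_eq_rpow, Fintype.card_fin,
      mul_div_rpow_eq_rpow_div_rpow_sub_one hB1 (sub_nonneg.mpr hθ1)]
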